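/- arXiv:1312.6573 — 10 statements merged into one kernel-verified Lean document; each statement's English description precedes it below -/
import Mathlib

section
/- Let n ≥ 1, let λ ≥ 1 be a real number, and let p, q, q_a : ℝ → EuclideanSpace ℝ (Fin n). Assume q is 1-Lipschitz; for every t ≥ 0, p t ≠ q_a t and ‖q_a t − q t‖ ≤ ‖p t − q t‖ / λ; and p is differentiable with deriv p t = (q_a t − p t) / ‖q_a t − p t‖ for every t ≥ 0 (the GreedyTracking strategy). Then for all t ≥ 0, ‖p t − q t‖ ≤ ‖p 0 − q 0‖ + t / λ². -/
/-!
Write `v = p - q` and `w = q_a - p`. The error bound `‖v + w‖ ≤ ‖v‖ / λ` forces the heading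
`w / ‖w‖` to have inner product at most `-(1 - 1/λ²)` with `v / ‖v‖`, so the distance from `p`
to the frozen position of the target shrinks at rate at least `1 - 1/λ²`, while the target's
unit speed adds at most `1`. Hence the right Dini derivative of `‖p - q‖` is at most `1/λ²`,
and a comparison argument integrates this bound.
-/

open Filter Set Topology
open scoped RealInnerProductSpace NNReal

theorem HasDerivAt.norm {F : Type*} [NormedAddCommGroup F] [InnerProductSpace ℝ F]
    {f : ℝ → F} {f' : F} {x : ℝ} (hf : HasDerivAt f f' x) (h0 : f x ≠ 0) :
    HasDerivAt (‖f ·‖) (⟪f x, f'⟫ / ‖f x‖) x := by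
  have hsqrt := hf.norm_sq.sqrt (by positivity)
  simp only [Real.sqrt_sq (norm_nonneg _)] at hsqrt
  convert hsqrt using 1
  field_simp

section Tracking

variable {E : Type*} [NormedAddCommGroup E] [InnerProductSpace ℝ E]

/- `-2⟪v, w⟫ ≥ ‖w‖² + (1 - μ)‖v‖²` by polarization, and this exceeds `2(1 - μ)‖v‖‖w‖` by
`(‖w‖ - (1 - μ)‖v‖)² + μ(1 - μ)‖v‖²`. -/
theorem inner_le_neg_mul_norm_mul_norm_of_norm_add_sq_le {v w : E} {μ : ℝ} (hμ₀ : 0 ≤ μ)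
    (hμ₁ : μ ≤ 1) (h : ‖v + w‖ ^ 2 ≤ μ * ‖v‖ ^ 2) :
    ⟪v, w⟫ ≤ -(1 - μ) * (‖v‖ * ‖w‖) := by
  have hpolar := norm_add_sq_real v w
  nlinarith [sq_nonneg (‖w‖ - (1 - μ) * ‖v‖), mul_nonneg (mul_nonneg hμ₀ (sub_nonneg.2 hμ₁))
    (sq_nonneg ‖v‖)]

theorem inner_div_norm_le_of_norm_add_sq_le {v w : E} {μ : ℝ} (hμ₀ : 0 ≤ μ) (hμ₁ : μ ≤ 1)
    (hv : v ≠ 0) (hw : w ≠ 0) (h : ‖v + w‖ ^ 2 ≤ μ * ‖v‖ ^ 2) :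
    ⟪v, ‖w‖⁻¹ • w⟫ / ‖v‖ ≤ -(1 - μ) := by
  have hv' : 0 < ‖v‖ := norm_pos_iff.2 hv
  have hw' : 0 < ‖w‖ := norm_pos_iff.2 hw
  rw [real_inner_smul_right, div_le_iff₀ hv', inv_mul_le_iff₀ hw']
  linarith [inner_le_neg_mul_norm_mul_norm_of_norm_add_sq_le hμ₀ hμ₁ h]

/- The distance to a `K`-Lipschitz target grows at most `K` faster than the distance to the
target's frozen position `q s`, which is differentiable at `s`. -/
theorem eventually_slope_norm_sub_lt {p q : ℝ → E} {u : E} {s r : ℝ} {K : ℝ≥0}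
    (hp : HasDerivAt p u s) (hq : LipschitzWith K q) (hs : p s ≠ q s)
    (hr : ⟪p s - q s, u⟫ / ‖p s - q s‖ + K < r) :
    ∀ᶠ z in 𝓝[>] s, slope (fun t ↦ ‖p t - q t‖) s z < r := by
  have hfrozen : HasDerivAt (fun t ↦ ‖p t - q s‖) (⟪p s - q s, u⟫ / ‖p s - q s‖) s :=
    (hp.sub_const (q s)).norm (sub_ne_zero.2 hs)
  have hlt : ∀ᶠ z in 𝓝[>] s, slope (fun t ↦ ‖p t - q s‖) s z < r - K :=
    ((hasDerivAt_iff_tendsto_slope.1 hfrozen).mono_left (nhdsGT_le_nhdsNE s)).eventually_lt_const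
      (by linarith)
  filter_upwards [hlt, self_mem_nhdsWithin] with z hz (hsz : s < z)
  have hsz' : 0 < z - s := sub_pos.2 hsz
  have hmove : ‖q s - q z‖ ≤ K * (z - s) := by
    simpa [← dist_eq_norm, Real.dist_eq, abs_of_neg (sub_neg.2 hsz)] using hq.dist_le_mul s z
  have htri : ‖p z - q z‖ ≤ ‖p z - q s‖ + ‖q s - q z‖ := norm_sub_le_norm_sub_add_norm_sub _ _ _
  rw [slope_def_field, div_lt_iff₀ hsz'] at hz ⊢
  nlinarith

end Tracking

theorem image_le_of_liminf_slope_right_le_const {f : ℝ → ℝ} {a b C : ℝ}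
    (hf : ContinuousOn f (Icc a b))
    (hslope : ∀ x ∈ Ico a b, ∀ r > C, ∃ᶠ z in 𝓝[>] x, slope f x z < r) :
    ∀ x ∈ Icc a b, f x ≤ f a + C * (x - a) := by
  refine fun x hx ↦ image_le_of_liminf_slope_right_le_deriv_boundary hf
    (B := fun x ↦ f a + C * (x - a)) (by simp) (by fun_prop) (fun y _ ↦ ?_) hslope hx
  simpa using ((hasDerivWithinAt_id y (Ici y)).sub_const a).const_mul C |>.const_add (f a)

theorem greedy_tracking_upper_bound_general
    (n : ℕ) (lam : ℝ) (hlam : 1 ≤ lam)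
    (p q qa : ℝ → EuclideanSpace ℝ (Fin n))
    (hq : LipschitzWith 1 q)
    (hne : ∀ t ≥ (0 : ℝ), p t ≠ qa t)
    (herr : ∀ t ≥ (0 : ℝ), ‖qa t - q t‖ ≤ ‖p t - q t‖ / lam)
    (hdiff : Differentiable ℝ p)
    (hderiv : ∀ t ≥ (0 : ℝ), deriv p t = (‖qa t - p t‖)⁻¹ • (qa t - p t)) :
    ∀ t ≥ (0 : ℝ), ‖p t - q t‖ ≤ ‖p 0 - q 0‖ + t / lam ^ 2 := by
  intro T hT
  have hμ₁ : 1 / lam ^ 2 ≤ 1 := div_le_one_of_le₀ (one_le_pow₀ hlam) (by positivity)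
  have hpq (t) (ht : 0 ≤ t) : p t ≠ q t := fun h ↦
    hne t ht (by simpa [h, sub_eq_zero, eq_comm] using herr t ht)
  have hdrift (t) (ht : 0 ≤ t) : ⟪p t - q t, deriv p t⟫ / ‖p t - q t‖ ≤ -(1 - 1 / lam ^ 2) := by
    refine hderiv t ht ▸ inner_div_norm_le_of_norm_add_sq_le (by positivity) hμ₁
      (sub_ne_zero.2 (hpq t ht)) (sub_ne_zero.2 (hne t ht).symm) ?_
    rw [sub_add_sub_cancel', one_div_mul_eq_div, ← div_pow]
    exact pow_le_pow_left₀ (norm_nonneg _) (herr t ht) 2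
  have hslope (t) (ht : t ∈ Ico 0 T) (r) (hr : r > 1 / lam ^ 2) :
      ∃ᶠ z in 𝓝[>] t, slope (fun t ↦ ‖p t - q t‖) t z < r :=
    (eventually_slope_norm_sub_lt (hdiff t).hasDerivAt hq (hpq t ht.1)
      (by push_cast; linarith [hdrift t ht.1])).frequently
  simpa [div_eq_mul_inv, mul_comm] using image_le_of_liminf_slope_right_le_const
    (hdiff.continuous.sub hq.continuous).norm.continuousOn hslope T ⟨hT, le_rfl⟩

/-- **Greedy tracking upper bound.** If the target `q` moves with unit speed, the
observed location `q_a` satisfies the relative error bound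
`‖q_a t - q t‖ ≤ ‖p t - q t‖ / λ`, and the tracker `p` moves at unit speed directly
toward the observed location (GreedyTracking), then the tracker–target distance
satisfies `‖p t - q t‖ ≤ ‖p 0 - q 0‖ + t / λ²` for all `t ≥ 0`. -/
theorem greedy_tracking_upper_bound
    (n : ℕ) (hn : 1 ≤ n) (lam : ℝ) (hlam : 1 ≤ lam)
    (p q qa : ℝ → EuclideanSpace ℝ (Fin n))
    (hq : LipschitzWith 1 q)
    (hne : ∀ t ≥ (0 : ℝ), p t ≠ qa t)
    (herr : ∀ t ≥ (0 : ℝ), ‖qa t - q t‖ ≤ ‖p t - q t‖ / lam)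
    (hdiff : Differentiable ℝ p)
    (hderiv : ∀ t ≥ (0 : ℝ), deriv p t = (‖qa t - p t‖)⁻¹ • (qa t - p t)) :
    ∀ t ≥ (0 : ℝ), ‖p t - q t‖ ≤ ‖p 0 - q 0‖ + t / lam ^ 2 :=
  greedy_tracking_upper_bound_general n lam hlam p q qa hq hne herr hdiff hderiv
end

section
/- For all real numbers d > 0, Δ ≥ 0 and any angle γ ∈ ℝ: √((Δ·sin γ)² + (d + Δ − Δ·cos γ)²) ≤ d + Δ·(1 + Δ/d)·(1 − cos γ). -/
theorem sq_add_sq_eq_bound_sq_sub_sq (d Δ s c : ℝ) (hd : d ≠ 0) (hsc : s ^ 2 + c ^ 2 = 1) :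
    (Δ * s) ^ 2 + (d + Δ - Δ * c) ^ 2
      = (d + Δ * (1 + Δ / d) * (1 - c)) ^ 2 - (Δ * (1 + Δ / d) * (1 - c)) ^ 2 := by
  field_simp
  linear_combination (d ^ 2 * Δ ^ 2) * hsc

/-- **Per-step distance bound for the greedy tracker.** If the current distance is `d`,
the tracker moves distance `Δ` toward the observed location and the target moves
distance `Δ` directly away, with `γ` the angle at the tracker between the true and
observed target locations, then the new distance satisfies
`√((Δ sin γ)² + (d + Δ − Δ cos γ)²) ≤ d + Δ(1 + Δ/d)(1 − cos γ)`. -/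
theorem greedy_step_distance_bound
    (d Δ γ : ℝ) (hd : 0 < d) (hΔ : 0 ≤ Δ) :
    Real.sqrt ((Δ * Real.sin γ) ^ 2 + (d + Δ - Δ * Real.cos γ) ^ 2)
      ≤ d + Δ * (1 + Δ / d) * (1 - Real.cos γ) := by
  have hcos : 0 ≤ 1 - Real.cos γ := sub_nonneg.2 (Real.cos_le_one γ)
  have hbound : 0 ≤ d + Δ * (1 + Δ / d) * (1 - Real.cos γ) :=
    add_nonneg hd.le (mul_nonneg (mul_nonneg hΔ (by positivity)) hcos)
  rw [Real.sqrt_le_left hbound,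
    sq_add_sq_eq_bound_sq_sub_sq d Δ _ _ hd.ne' (Real.sin_sq_add_cos_sq γ)]
  exact sub_le_self _ (sq_nonneg _)
end

section
/- Let E be a real inner product space and let p, q, q' ∈ E with q ≠ p and q' ≠ p. Then Real.sin (InnerProductGeometry.angle (q − p) (q' − p)) ≤ ‖q − q'‖ / ‖q − p‖. -/
open InnerProductGeometry

/-- By the law of cosines,
`‖x - y‖ ^ 2 = (sin (angle x y) * ‖x‖) ^ 2 + (‖y‖ - ‖x‖ * cos (angle x y)) ^ 2`. -/
theorem InnerProductGeometry.sin_angle_mul_norm_le_norm_sub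
    {V : Type*} [NormedAddCommGroup V] [InnerProductSpace ℝ V] (x y : V) :
    Real.sin (angle x y) * ‖x‖ ≤ ‖x - y‖ := by
  have law_cos := norm_sub_sq_eq_norm_sq_add_norm_sq_sub_two_mul_norm_mul_norm_mul_cos_angle x y
  have h_sq : (Real.sin (angle x y) * ‖x‖) ^ 2 ≤ ‖x - y‖ ^ 2 := by
    nlinarith [Real.sin_sq_add_cos_sq (angle x y), sq_nonneg (‖y‖ - ‖x‖ * Real.cos (angle x y))]
  exact abs_le_of_sq_le_sq' h_sq (norm_nonneg _) |>.2

theorem sin_angle_le_dist_div_dist_general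
    {E : Type*} [NormedAddCommGroup E] [InnerProductSpace ℝ E]
    (p q q' : E) (hq : q ≠ p) :
    Real.sin (InnerProductGeometry.angle (q - p) (q' - p)) ≤ ‖q - q'‖ / ‖q - p‖ := by
  rw [le_div_iff₀ (norm_pos_iff.2 (sub_ne_zero.2 hq))]
  simpa only [sub_sub_sub_cancel_right] using sin_angle_mul_norm_le_norm_sub (q - p) (q' - p)

/-- In a real inner product space, the sine of the angle at `p` between the
directions toward `q` and toward `q'` is at most `‖q − q'‖ / ‖q − p‖`. -/
theorem sin_angle_le_dist_div_dist
    {E : Type*} [NormedAddCommGroup E] [InnerProductSpace ℝ E]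
    (p q q' : E) (hq : q ≠ p) (hq' : q' ≠ p) :
    Real.sin (InnerProductGeometry.angle (q - p) (q' - p)) ≤ ‖q - q'‖ / ‖q - p‖ :=
  sin_angle_le_dist_div_dist_general p q q' hq
end

section
/- For all real numbers d > 0, λ ≥ 1, and 0 < α ≤ 1: √((√(4d² − α²d²/λ²) − d)² + α²d²/λ²) ≥ d·√(1 + α²/(2λ²)). -/
/-! With `t = α²/λ²` the squared right-hand side is `(s - d)² + t d²` where
`s² = (4 - t) d²`, which expands to `5d² - 2sd`. So everything reduces to the
tangent-line bound `√(4 - t) ≤ 2 - t/4` of the concave square root at `t = 0`. -/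

theorem sqrt_four_sub_le (t : ℝ) (ht : t ≤ 8) : √(4 - t) ≤ 2 - t / 4 :=
  Real.sqrt_le_iff.mpr ⟨by linarith, by nlinarith [sq_nonneg t]⟩

theorem mul_sqrt_one_add_half_le (d t : ℝ) (ht0 : 0 ≤ t) (ht4 : t ≤ 4) :
    d * √(1 + t / 2) ≤ √((√(4 * d ^ 2 - t * d ^ 2) - d) ^ 2 + t * d ^ 2) := by
  set r := √(4 - t)
  have hr0 : 0 ≤ r := Real.sqrt_nonneg _
  have hr2 : r ^ 2 = 4 - t := Real.sq_sqrt (by linarith)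
  have hr : r ≤ 2 - t / 4 := sqrt_four_sub_le t (by linarith)
  have hs : √(4 * d ^ 2 - t * d ^ 2) = r * |d| := by
    rw [show 4 * d ^ 2 - t * d ^ 2 = (4 - t) * d ^ 2 by ring, Real.sqrt_mul (by linarith),
      Real.sqrt_sq_eq_abs]
  rw [hs]
  refine (le_abs_self _).trans (Real.abs_le_sqrt ?_)
  have hd : |d| * d ≤ d ^ 2 := by
    rw [sq, ← abs_mul_abs_self]
    exact mul_le_mul_of_nonneg_left (le_abs_self d) (abs_nonneg d)
  calc (d * √(1 + t / 2)) ^ 2 = 5 * d ^ 2 - 2 * ((2 - t / 4) * d ^ 2) := by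
        rw [mul_pow, Real.sq_sqrt (by linarith)]; ring
    _ ≤ 5 * d ^ 2 - 2 * (r * d ^ 2) := by gcongr
    _ ≤ 5 * d ^ 2 - 2 * (r * (|d| * d)) := by gcongr
    _ = (r * |d| - d) ^ 2 + t * d ^ 2 := by rw [sub_sq, mul_pow, sq_abs, hr2]; ring

theorem phase_distance_growth_general
    (d lam α : ℝ) (hlam : 1 ≤ lam) (hα0 : 0 < α) (hα1 : α ≤ 1) :
    d * Real.sqrt (1 + α ^ 2 / (2 * lam ^ 2)) ≤
      Real.sqrt ((Real.sqrt (4 * d ^ 2 - α ^ 2 * d ^ 2 / lam ^ 2) - d) ^ 2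
        + α ^ 2 * d ^ 2 / lam ^ 2) := by
  have ht4 : α ^ 2 / lam ^ 2 ≤ 4 := by
    rw [div_le_iff₀ (by positivity)]
    nlinarith [pow_le_one₀ (n := 2) hα0.le hα1, one_le_pow₀ (n := 2) hlam]
  rw [show α ^ 2 * d ^ 2 / lam ^ 2 = α ^ 2 / lam ^ 2 * d ^ 2 by ring,
    show α ^ 2 / (2 * lam ^ 2) = α ^ 2 / lam ^ 2 / 2 by ring]
  exact mul_sqrt_one_add_half_le d _ (by positivity) ht4

/-- **Phase distance growth (equal speeds).** The distance between the target's
destination and the best possible tracker position after the tracker moves distance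
`2d` along the central axis is at least `d·√(1 + α²/(2λ²))`. -/
theorem phase_distance_growth
    (d lam α : ℝ) (hd : 0 < d) (hlam : 1 ≤ lam) (hα0 : 0 < α) (hα1 : α ≤ 1) :
    d * Real.sqrt (1 + α ^ 2 / (2 * lam ^ 2)) ≤
      Real.sqrt ((Real.sqrt (4 * d ^ 2 - α ^ 2 * d ^ 2 / lam ^ 2) - d) ^ 2
        + α ^ 2 * d ^ 2 / lam ^ 2) :=
  phase_distance_growth_general d lam α hlam hα0 hα1
end

section
/- Let d > 0, λ ≥ 1, and 0 < α ≤ 1 be real numbers. In the plane ℝ², let p = (0,0), h = √(4d² − α²d²/λ²), q_a = (d + h, α·d/λ), and q_b = (d + h, −α·d/λ). Then for every point p' ∈ ℝ² with ‖p' − p‖ ≤ 2d, one has max (‖p' − q_a‖) (‖p' − q_b‖) ≥ d·√(1 + α²/(2λ²)). -/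
/-!
The midpoint of `q_a q_b` is `q_c = (d + h, 0)`, and by Apollonius' theorem the larger of the
distances from `p'` to `q_a`, `q_b` satisfies `max² ≥ dist(p', q_c)² + (αd/λ)²`. Since `p'` lies
in the disc of radius `2d` about the origin and `‖q_c‖ = d + h`, the triangle inequality gives
`dist(p', q_c) ≥ h - d`, and `(h - d)² ≥ d² - (αd/λ)²/2` is elementary algebra in
`h² = 4d² - (αd/λ)²`.
-/

theorem sq_dist_midpoint_add_sq_half_dist_le_max_sq {V P : Type*} [NormedAddCommGroup V]
    [InnerProductSpace ℝ V] [MetricSpace P] [NormedAddTorsor V P] (x a b : P) :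
    dist x (midpoint ℝ a b) ^ 2 + (dist a b / 2) ^ 2 ≤ max (dist x a) (dist x b) ^ 2 := by
  have hsum := EuclideanGeometry.dist_sq_add_dist_sq_eq_two_mul_dist_midpoint_sq_add_half_dist_sq
    x a b
  have ha : dist x a ^ 2 ≤ max (dist x a) (dist x b) ^ 2 := by gcongr; exact le_max_left _ _
  have hb : dist x b ^ 2 ≤ max (dist x a) (dist x b) ^ 2 := by gcongr; exact le_max_right _ _
  linarith

theorem sq_sub_half_sq_le_sq_of_sqrt_sub_le {d b r : ℝ} (hr : 0 ≤ r)
    (h : √(4 * d ^ 2 - b ^ 2) - d ≤ r) : d ^ 2 - b ^ 2 / 2 ≤ r ^ 2 := by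
  rcases le_or_gt (2 * d ^ 2) (b ^ 2) with hb | hb
  · nlinarith
  set s := √(4 * d ^ 2 - b ^ 2)
  have hs2 : s ^ 2 = 4 * d ^ 2 - b ^ 2 := Real.sq_sqrt (by nlinarith)
  have hds : d ≤ s := Real.le_sqrt_of_sq_le (by nlinarith)
  -- `(4d² - b²/2)² - (2ds)² = b⁴/4`
  have hsd : d ^ 2 - b ^ 2 / 2 ≤ (s - d) ^ 2 := by
    nlinarith [sq_nonneg (4 * d ^ 2 - b ^ 2 / 2 - 2 * d * s)]
  nlinarith

theorem dist_equiv_symm_fin_two (x y x' y' : ℝ) :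
    dist ((WithLp.equiv 2 (Fin 2 → ℝ)).symm ![x, y]) ((WithLp.equiv 2 (Fin 2 → ℝ)).symm ![x', y'])
      = √((x - x') ^ 2 + (y - y') ^ 2) := by
  simp [EuclideanSpace.dist_eq, Fin.sum_univ_two, Real.dist_eq, sq_abs]

theorem midpoint_equiv_symm_fin_two (x y x' y' : ℝ) :
    midpoint ℝ ((WithLp.equiv 2 (Fin 2 → ℝ)).symm ![x, y])
        ((WithLp.equiv 2 (Fin 2 → ℝ)).symm ![x', y'])
      = (WithLp.equiv 2 (Fin 2 → ℝ)).symm ![(x + x') / 2, (y + y') / 2] := by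
  ext i
  fin_cases i <;> simp [midpoint_eq_smul_add] <;> ring

theorem phase_lower_bound_plane_general
    (d lam α : ℝ)
    (h : ℝ) (hh : h = Real.sqrt (4 * d ^ 2 - α ^ 2 * d ^ 2 / lam ^ 2))
    (p qa qb : EuclideanSpace ℝ (Fin 2))
    (hp : p = (WithLp.equiv 2 (Fin 2 → ℝ)).symm ![0, 0])
    (hqa : qa = (WithLp.equiv 2 (Fin 2 → ℝ)).symm ![d + h, α * d / lam])
    (hqb : qb = (WithLp.equiv 2 (Fin 2 → ℝ)).symm ![d + h, -(α * d / lam)]) :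
    ∀ p' : EuclideanSpace ℝ (Fin 2), ‖p' - p‖ ≤ 2 * d →
      d * Real.sqrt (1 + α ^ 2 / (2 * lam ^ 2)) ≤ max ‖p' - qa‖ ‖p' - qb‖ := by
  intro p' hp'
  rw [← dist_eq_norm] at hp'
  rw [← dist_eq_norm, ← dist_eq_norm]
  set b := α * d / lam
  have hb2 : α ^ 2 * d ^ 2 / lam ^ 2 = b ^ 2 := by ring
  have hhalf : (dist qa qb / 2) ^ 2 = b ^ 2 := by
    rw [hqa, hqb, dist_equiv_symm_fin_two, div_pow, Real.sq_sqrt (by positivity)]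
    ring
  have hpqc : d + h ≤ dist p (midpoint ℝ qa qb) := by
    rw [hp, hqa, hqb, midpoint_equiv_symm_fin_two, dist_equiv_symm_fin_two]
    exact Real.le_sqrt_of_sq_le (by nlinarith)
  have hfar : √(4 * d ^ 2 - b ^ 2) - d ≤ dist p' (midpoint ℝ qa qb) := by
    have := dist_triangle p p' (midpoint ℝ qa qb)
    rw [dist_comm p p'] at this
    rw [← hb2, ← hh]
    linarith
  have hnear := sq_sub_half_sq_le_sq_of_sqrt_sub_le dist_nonneg hfar
  have hapollonius := sq_dist_midpoint_add_sq_half_dist_le_max_sq p' qa qb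
  rw [hhalf] at hapollonius
  have hM : 0 ≤ max (dist p' qa) (dist p' qb) := le_max_of_le_left dist_nonneg
  refine (abs_le_of_sq_le_sq' ?_ hM).2
  rw [mul_pow, Real.sq_sqrt (by positivity)]
  linarith [show d ^ 2 * (1 + α ^ 2 / (2 * lam ^ 2)) = d ^ 2 + b ^ 2 / 2 by ring]

/-- **Phase lower bound in the plane.** With the tracker at the origin, target tips
`q_a = (d + h, αd/λ)` and `q_b = (d + h, −αd/λ)` where `h = √(4d² − α²d²/λ²)`,
any tracker position `p'` with `‖p' − p‖ ≤ 2d` is at distance at least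
`d·√(1 + α²/(2λ²))` from one of `q_a`, `q_b`. -/
theorem phase_lower_bound_plane
    (d lam α : ℝ) (hd : 0 < d) (hlam : 1 ≤ lam) (hα0 : 0 < α) (hα1 : α ≤ 1)
    (h : ℝ) (hh : h = Real.sqrt (4 * d ^ 2 - α ^ 2 * d ^ 2 / lam ^ 2))
    (p qa qb : EuclideanSpace ℝ (Fin 2))
    (hp : p = (WithLp.equiv 2 (Fin 2 → ℝ)).symm ![0, 0])
    (hqa : qa = (WithLp.equiv 2 (Fin 2 → ℝ)).symm ![d + h, α * d / lam])
    (hqb : qb = (WithLp.equiv 2 (Fin 2 → ℝ)).symm ![d + h, -(α * d / lam)]) :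
    ∀ p' : EuclideanSpace ℝ (Fin 2), ‖p' - p‖ ≤ 2 * d →
      d * Real.sqrt (1 + α ^ 2 / (2 * lam ^ 2)) ≤ max ‖p' - qa‖ ‖p' - qb‖ :=
  phase_lower_bound_plane_general d lam α h hh p qa qb hp hqa hqb
end

section
/- Let λ ≥ 1 and 0 < α ≤ 1 be real numbers, and let d, t : ℕ → ℝ satisfy d 0 > 0, t 0 = 0, and for every i: t (i+1) = t i + 2·(d i) and d (i+1) ≥ (d i)·√(1 + α²/(2λ²)). Then for every n: d n ≥ d 0 + (α²/(16λ²))·(t n). -/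
/-! If every phase multiplies the distance by at least `1 + c·k` while lasting `k` times the
current distance, then over a phase the distance grows by at least `c` times the elapsed time;
summing over phases gives the linear bound. For `x = α²/(2λ²) ≤ 8` one has
`√(1 + x) ≥ 1 + x/4`, which is this growth condition with `k = 2` and `c = α²/(16λ²)`. -/

theorem Real.one_add_div_four_le_sqrt_one_add {x : ℝ} (hx0 : 0 ≤ x) (hx8 : x ≤ 8) :
    1 + x / 4 ≤ √(1 + x) :=
  Real.le_sqrt_of_sq_le (by nlinarith)

section Phases

variable {d t : ℕ → ℝ} {r : ℝ}

theorem pos_of_mul_le_succ (hd0 : 0 < d 0) (hr : 0 < r) (hd : ∀ i, d i * r ≤ d (i + 1)) :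
    ∀ n, 0 < d n
  | 0 => hd0
  | n + 1 => (mul_pos (pos_of_mul_le_succ hd0 hr hd n) hr).trans_le (hd n)

theorem add_mul_time_le_of_phases {c k : ℝ} (hc : 0 ≤ c) (hk : 0 ≤ k)
    (hr : 1 + c * k ≤ r) (hd0 : 0 < d 0) (ht0 : t 0 = 0)
    (ht : ∀ i, t (i + 1) = t i + k * d i) (hd : ∀ i, d i * r ≤ d (i + 1)) :
    ∀ n, d 0 + c * t n ≤ d n := by
  have hpos := pos_of_mul_le_succ hd0 (by nlinarith) hd
  intro n
  induction n with
  | zero => simp [ht0]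
  | succ n ih =>
    calc d 0 + c * t (n + 1) = d 0 + c * t n + c * k * d n := by rw [ht]; ring
      _ ≤ d n * (1 + c * k) := by nlinarith
      _ ≤ d n * r := mul_le_mul_of_nonneg_left hr (hpos n).le
      _ ≤ d (n + 1) := hd n

end Phases

/-- **Ω(t/λ²) lower bound via phases.** If phase `i` starts at time `t i` with
distance `d i`, lasts `2·(d i)` time units, and multiplies the distance by at
least `√(1 + α²/(2λ²))`, then `d n ≥ d 0 + (α²/(16λ²))·(t n)` for every `n`. -/
theorem phased_distance_lower_bound
    (lam α : ℝ) (hlam : 1 ≤ lam) (hα0 : 0 < α) (hα1 : α ≤ 1)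
    (d t : ℕ → ℝ) (hd0 : 0 < d 0) (ht0 : t 0 = 0)
    (ht : ∀ i, t (i + 1) = t i + 2 * d i)
    (hd : ∀ i, d i * Real.sqrt (1 + α ^ 2 / (2 * lam ^ 2)) ≤ d (i + 1)) :
    ∀ n, d 0 + α ^ 2 / (16 * lam ^ 2) * t n ≤ d n := by
  have hx8 : α ^ 2 / (2 * lam ^ 2) ≤ 8 := by
    rw [div_le_iff₀ (by positivity)]
    nlinarith
  have hr := Real.one_add_div_four_le_sqrt_one_add (by positivity) hx8
  refine add_mul_time_le_of_phases (by positivity) zero_le_two ?_ hd0 ht0 ht hd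
  convert hr using 2
  ring
end

section
/- For all real numbers λ ≥ 2, 1 ≤ s ≤ √(1/(1 − 1/λ²)), and 0 < α ≤ 0.68: α²·(1 + 1/(2λ²)) + 4·α·s + 4·s² − 9 ≤ 0. -/
/-!
For `λ ≥ 2` we have `1/(2λ²) ≤ 1/8` and `1/(1 − 1/λ²) ≤ 4/3`, so `s ≤ 2/√3 < 1.1548`.
The left-hand side is increasing in `α ≥ 0` and `s ≥ 0`, and at the corner
`α = 0.68`, `s² = 4/3` it is `9/8 · 0.68² + 4 · 0.68 · 2/√3 + 16/3 − 9 ≈ −0.0057 < 0`.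
-/

lemma one_div_two_mul_sq_le_of_two_le {lam : ℝ} (hlam : 2 ≤ lam) :
    1 / (2 * lam ^ 2) ≤ 1 / 8 := by
  gcongr
  nlinarith

lemma one_div_one_sub_inv_sq_le_of_two_le {lam : ℝ} (hlam : 2 ≤ lam) :
    1 / (1 - 1 / lam ^ 2) ≤ 4 / 3 := by
  have hinv : 1 / lam ^ 2 ≤ 1 / 4 := by
    gcongr
    nlinarith
  rw [div_le_div_iff₀ (by linarith) (by norm_num)]
  linarith

lemma sq_le_four_thirds_of_le_sqrt {lam s : ℝ} (hlam : 2 ≤ lam) (hs : 0 < s)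
    (hs2 : s ≤ Real.sqrt (1 / (1 - 1 / lam ^ 2))) : s ^ 2 ≤ 4 / 3 :=
  ((Real.le_sqrt' hs).mp hs2).trans (one_div_one_sub_inv_sq_le_of_two_le hlam)

lemma alpha_invariant_bound_of_sq_le_four_thirds {s α : ℝ} (hs0 : 0 ≤ s) (hs : s ^ 2 ≤ 4 / 3)
    (hα0 : 0 ≤ α) (hα : α ≤ 0.68) : α ^ 2 * (9 / 8) + 4 * α * s + 4 * s ^ 2 - 9 ≤ 0 := by
  -- a rational upper bound for `2/√3`, slack enough for the corner value to stay negative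
  have hs' : s ≤ 1.1548 := by nlinarith
  nlinarith [mul_nonneg (sub_nonneg.2 hα) (sub_nonneg.2 hs'),
    mul_nonneg (sub_nonneg.2 hα) hα0]

/-- **Feasibility of the α-Invariant against a faster tracker.** For `λ ≥ 2`,
tracker speed `1 ≤ s ≤ √(1/(1 − 1/λ²))`, and `0 < α ≤ 0.68`,
`α²(1 + 1/(2λ²)) + 4αs + 4s² − 9 ≤ 0`. -/
theorem alpha_invariant_feasible_speedup
    (lam s α : ℝ) (hlam : 2 ≤ lam) (hs1 : 1 ≤ s)
    (hs2 : s ≤ Real.sqrt (1 / (1 - 1 / lam ^ 2)))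
    (hα0 : 0 < α) (hα : α ≤ 0.68) :
    α ^ 2 * (1 + 1 / (2 * lam ^ 2)) + 4 * α * s + 4 * s ^ 2 - 9 ≤ 0 := by
  have hs : s ^ 2 ≤ 4 / 3 := sq_le_four_thirds_of_le_sqrt hlam (by linarith) hs2
  calc α ^ 2 * (1 + 1 / (2 * lam ^ 2)) + 4 * α * s + 4 * s ^ 2 - 9
      ≤ α ^ 2 * (9 / 8) + 4 * α * s + 4 * s ^ 2 - 9 := by
        gcongr
        linarith [one_div_two_mul_sq_le_of_two_le hlam]
    _ ≤ 0 := alpha_invariant_bound_of_sq_le_four_thirds (by linarith) hs hα0.le hα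
end

section
/- For all real numbers d > 0, λ ≥ 1, 0 < α ≤ 1, and s ≥ 1/2: √((√(4d² − α²d²/λ²) − (2s − 1)·d)² + α²d²/λ²) ≥ d·√((2s − 3)² + α²·(s − 1/2)/λ²). -/
/-- Since `u² = 4 - t`, the difference of the two sides is `(2s - 1)(2 - u)² / 2`. -/
lemma sq_add_mul_le_sq_sub_add {t u s : ℝ} (hu : u ^ 2 + t = 4) (hs : 1 / 2 ≤ s) :
    (2 * s - 3) ^ 2 + t * (s - 1 / 2) ≤ (u - (2 * s - 1)) ^ 2 + t := by
  nlinarith [mul_nonneg (sub_nonneg.2 hs) (sq_nonneg (2 - u))]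

lemma mul_sqrt_le_sqrt_sub_sq_add {d t s : ℝ} (hd : 0 ≤ d) (ht : t ≤ 4) (hs : 1 / 2 ≤ s) :
    d * √((2 * s - 3) ^ 2 + t * (s - 1 / 2)) ≤
      √((√(4 * d ^ 2 - t * d ^ 2) - (2 * s - 1) * d) ^ 2 + t * d ^ 2) := by
  set u := √(4 - t)
  have hu : u ^ 2 + t = 4 := by rw [Real.sq_sqrt (by linarith)]; ring
  have hscale : √(4 * d ^ 2 - t * d ^ 2) = d * u := by
    rw [show 4 * d ^ 2 - t * d ^ 2 = d ^ 2 * (4 - t) by ring,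
      Real.sqrt_mul (sq_nonneg d), Real.sqrt_sq hd]
  calc d * √((2 * s - 3) ^ 2 + t * (s - 1 / 2))
      = √(d ^ 2 * ((2 * s - 3) ^ 2 + t * (s - 1 / 2))) := by
        rw [Real.sqrt_mul (sq_nonneg d), Real.sqrt_sq hd]
    _ ≤ √(d ^ 2 * ((u - (2 * s - 1)) ^ 2 + t)) := by
        gcongr √(d ^ 2 * ?_)
        exact sq_add_mul_le_sq_sub_add hu hs
    _ = √((√(4 * d ^ 2 - t * d ^ 2) - (2 * s - 1) * d) ^ 2 + t * d ^ 2) := by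
        rw [hscale]; ring_nf

/-- **Phase distance growth against a tracker with speed `s`.** The distance between
the target's destination and the best tracker position after it moves distance `2sd`
along the central axis is at least `d·√((2s − 3)² + α²(s − 1/2)/λ²)`. -/
theorem phase_distance_growth_speedup
    (d lam α s : ℝ) (hd : 0 < d) (hlam : 1 ≤ lam)
    (hα0 : 0 < α) (hα1 : α ≤ 1) (hs : 1 / 2 ≤ s) :
    d * Real.sqrt ((2 * s - 3) ^ 2 + α ^ 2 * (s - 1 / 2) / lam ^ 2) ≤
      Real.sqrt ((Real.sqrt (4 * d ^ 2 - α ^ 2 * d ^ 2 / lam ^ 2)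
        - (2 * s - 1) * d) ^ 2 + α ^ 2 * d ^ 2 / lam ^ 2) := by
  have ht : α ^ 2 / lam ^ 2 ≤ 4 := by
    have : α ^ 2 ≤ lam ^ 2 := pow_le_pow_left₀ hα0.le (hα1.trans hlam) 2
    have : α ^ 2 / lam ^ 2 ≤ 1 := div_le_one_of_le₀ this (sq_nonneg lam)
    linarith
  rw [show α ^ 2 * (s - 1 / 2) / lam ^ 2 = α ^ 2 / lam ^ 2 * (s - 1 / 2) by ring,
    show α ^ 2 * d ^ 2 / lam ^ 2 = α ^ 2 / lam ^ 2 * d ^ 2 by ring]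
  exact mul_sqrt_le_sqrt_sub_sq_add hd.le ht hs
end

section
/- Let λ ≥ 1 be a real number and let d, t : ℕ → ℝ and x : ℕ → ℝ satisfy t 0 = 0 and, for every i: d i > 0, |x i| ≤ 1/λ, t (i+1) = t i + (1 + x i)·(d i), and d (i+1) ≤ d i + (d i)/λ + (x i)·(d i). Then for every n: d n ≤ d 0 + (2/(λ + 1))·(t n). -/
/-!
Each phase raises the distance by at most `(1/λ + x) d` and lasts `(1 + x) d`, and for `x ≤ 1/λ`
the ratio of the two is at most `2/(λ + 1)`. Hence `d - 2/(λ + 1) · t` never increases from one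
phase to the next.
-/

theorem one_div_add_le_two_div_add_one_mul {lam x : ℝ} (hlam : 1 ≤ lam) (hx : x ≤ 1 / lam) :
    1 / lam + x ≤ 2 / (lam + 1) * (1 + x) := by
  have hlam0 : 0 < lam := by linarith
  have hxlam : x * lam ≤ 1 := by rwa [← le_div_iff₀ hlam0]
  have gap : 2 / (lam + 1) * (1 + x) - (1 / lam + x) =
      (lam - 1) * (1 - x * lam) / (lam * (lam + 1)) := by
    field_simp
    ring
  rw [← sub_nonneg, gap]
  exact div_nonneg (mul_nonneg (by linarith) (by linarith)) (by positivity)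

/-- **O(t/λ) upper bound for Phased-Greedy among obstacles.** If phase `i` starts at
time `t i` with geodesic distance `d i > 0`, lasts `(1 + x i)·(d i)` time units with
`|x i| ≤ 1/λ`, and the distance increases by at most `(d i)/λ + (x i)·(d i)`, then
`d n ≤ d 0 + (2/(λ + 1))·(t n)` for every `n`. -/
theorem phased_greedy_upper_bound
    (lam : ℝ) (hlam : 1 ≤ lam) (d t x : ℕ → ℝ)
    (ht0 : t 0 = 0)
    (hd_pos : ∀ i, 0 < d i)
    (hx : ∀ i, |x i| ≤ 1 / lam)
    (ht : ∀ i, t (i + 1) = t i + (1 + x i) * d i)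
    (hd : ∀ i, d (i + 1) ≤ d i + d i / lam + x i * d i) :
    ∀ n, d n ≤ d 0 + 2 / (lam + 1) * t n := by
  have step : ∀ i, d (i + 1) - 2 / (lam + 1) * t (i + 1) ≤ d i - 2 / (lam + 1) * t i := by
    intro i
    have phase := mul_le_mul_of_nonneg_right
      (one_div_add_le_two_div_add_one_mul hlam (abs_le.mp (hx i)).2) (hd_pos i).le
    rw [ht i]
    linear_combination hd i + phase
  intro n
  have decrease := antitone_nat_of_succ_le (f := fun i ↦ d i - 2 / (lam + 1) * t i) step n.zero_le
  simp only [ht0] at decrease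
  linarith
end

section
/- For all real numbers d > 0, Δ ≥ 0, s ≥ 1, and any angle γ ∈ ℝ: √((s·Δ·sin γ)² + (d + Δ − s·Δ·cos γ)²) ≤ d + s²Δ²/(2d) − Δ²/(2d) + Δ·(1 + Δ/d)·(1 − s·cos γ). -/
/-! The squared new distance `E` is given by the law of cosines, and the right-hand side of the
bound is exactly `(E + d²) / (2d)`, so the claim is AM–GM: `√E ≤ (E / d + d) / 2`. -/

theorem Real.sqrt_le_add_sq_div_two_mul {x d : ℝ} (hx : 0 ≤ x) (hd : 0 < d) :
    √x ≤ (x + d ^ 2) / (2 * d) := by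
  rw [le_div_iff₀ (by positivity)]
  nlinarith [Real.sq_sqrt hx, sq_nonneg (√x - d)]

theorem Real.sq_mul_sin_add_sq_sub_mul_cos (a b γ : ℝ) :
    (a * Real.sin γ) ^ 2 + (b - a * Real.cos γ) ^ 2 = a ^ 2 + b ^ 2 - 2 * a * b * Real.cos γ := by
  linear_combination a ^ 2 * Real.sin_sq_add_cos_sq γ

theorem speedup_step_distance_bound_general
    (d Δ s γ : ℝ) (hd : 0 < d) :
    Real.sqrt ((s * Δ * Real.sin γ) ^ 2 + (d + Δ - s * Δ * Real.cos γ) ^ 2)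
      ≤ d + s ^ 2 * Δ ^ 2 / (2 * d) - Δ ^ 2 / (2 * d)
        + Δ * (1 + Δ / d) * (1 - s * Real.cos γ) := by
  have hbound := Real.sqrt_le_add_sq_div_two_mul
    (add_nonneg (sq_nonneg (s * Δ * Real.sin γ)) (sq_nonneg (d + Δ - s * Δ * Real.cos γ))) hd
  convert hbound using 1
  rw [Real.sq_mul_sin_add_sq_sub_mul_cos]
  field_simp
  ring

/-- **Per-step distance bound for a tracker with speed `s ≥ 1`.** If the current
distance is `d`, the tracker moves distance `s·Δ` toward the observed location while
the target moves distance `Δ` directly away, with `γ` the angle at the tracker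
between the true and observed target locations, then the new distance is at most
`d + s²Δ²/(2d) − Δ²/(2d) + Δ(1 + Δ/d)(1 − s·cos γ)`. -/
theorem speedup_step_distance_bound
    (d Δ s γ : ℝ) (hd : 0 < d) (hΔ : 0 ≤ Δ) (hs : 1 ≤ s) :
    Real.sqrt ((s * Δ * Real.sin γ) ^ 2 + (d + Δ - s * Δ * Real.cos γ) ^ 2)
      ≤ d + s ^ 2 * Δ ^ 2 / (2 * d) - Δ ^ 2 / (2 * d)
        + Δ * (1 + Δ / d) * (1 - s * Real.cos γ) :=
  speedup_step_distance_bound_general d Δ s γ hd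
end
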